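/- arXiv:1512.01090 — 4 statements merged into one kernel-verified Lean document; each statement's English description precedes it below -/
import Mathlib

section
/- Let f : [0,1] → ℝ be defined by f(x) = -x·log₂(x) (with f(0)=0). For any real numbers x, y ∈ [0,1] with |x - y| ≤ 1/2, we have |f(x) - f(y)| ≤ f(|x - y|). -/
open Real

/-- Decreasing increments for the concave function `negMulLog`. -/
private lemma negMulLog_sub_le_sub {a b t : ℝ} (ha : 0 ≤ a) (hab : a ≤ b) (ht : 0 ≤ t) :
    negMulLog a - negMulLog (a + t) ≤ negMulLog b - negMulLog (b + t) := by
  rcases eq_or_lt_of_le (by linarith : a ≤ b + t) with h | h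
  · have hab' : a = b := le_antisymm hab (by nlinarith)
    have ht0 : t = 0 := by linarith
    simp [hab', ht0]
  · have hcpos : 0 < b + t - a := by linarith
    have hl : 0 ≤ t / (b + t - a) := div_nonneg ht hcpos.le
    have hm : 0 ≤ (b - a) / (b + t - a) := div_nonneg (by linarith) hcpos.le
    have hsum : (b - a) / (b + t - a) + t / (b + t - a) = 1 := by field_simp; ring
    have hsum' : t / (b + t - a) + (b - a) / (b + t - a) = 1 := by linarith
    have hmem1 : a ∈ Set.Ici (0 : ℝ) := ha
    have hmem2 : (b + t) ∈ Set.Ici (0 : ℝ) := by simp only [Set.mem_Ici]; linarith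
    have h1 := concaveOn_negMulLog.2 hmem1 hmem2 hm hl hsum
    have h2 := concaveOn_negMulLog.2 hmem1 hmem2 hl hm hsum'
    simp only [smul_eq_mul] at h1 h2
    have e1 : (b - a) / (b + t - a) * a + t / (b + t - a) * (b + t) = a + t := by
      field_simp; ring
    have e2 : t / (b + t - a) * a + (b - a) / (b + t - a) * (b + t) = b := by
      field_simp; ring
    rw [e1] at h1
    rw [e2] at h2
    have hadd := add_le_add h1 h2
    have hmain : negMulLog a + negMulLog (b + t) ≤ negMulLog (a + t) + negMulLog b := by
      calc negMulLog a + negMulLog (b + t)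
          = ((b - a) / (b + t - a) + t / (b + t - a)) * (negMulLog a + negMulLog (b + t)) := by
            rw [hsum]; ring
        _ = ((b - a) / (b + t - a) * negMulLog a + t / (b + t - a) * negMulLog (b + t))
            + (t / (b + t - a) * negMulLog a + (b - a) / (b + t - a) * negMulLog (b + t)) := by
            ring
        _ ≤ _ := hadd
    linarith

/-- For `0 < t ≤ 1/2`, `negMulLog (1 - t) ≤ negMulLog t`. -/
private lemma negMulLog_one_sub_le {t : ℝ} (ht0 : 0 < t) (ht : t ≤ 1 / 2) :
    negMulLog (1 - t) ≤ negMulLog t := by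
  have h1t : 0 < 1 - t := by linarith
  have hl : 0 ≤ t / (1 - t) := div_nonneg ht0.le h1t.le
  have hm : 0 ≤ (1 - 2 * t) / (1 - t) := div_nonneg (by linarith) h1t.le
  have hsum : t / (1 - t) + (1 - 2 * t) / (1 - t) = 1 := by field_simp; ring
  have hmem1 : t ∈ Set.Ioi (0 : ℝ) := ht0
  have hmem2 : (1 : ℝ) ∈ Set.Ioi (0 : ℝ) := Set.mem_Ioi.2 one_pos
  have h := strictConcaveOn_log_Ioi.concaveOn.2 hmem1 hmem2 hl hm hsum
  simp only [smul_eq_mul, Real.log_one, mul_zero, add_zero, mul_one] at h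
  have e : t / (1 - t) * t + (1 - 2 * t) / (1 - t) = 1 - t := by
    field_simp; ring
  rw [e] at h
  -- h : t / (1 - t) * log t ≤ log (1 - t)
  have h2 := mul_le_mul_of_nonneg_left h h1t.le
  have e2 : (1 - t) * (t / (1 - t) * log t) = t * log t := by field_simp
  rw [e2] at h2
  simp only [negMulLog, neg_mul]
  linarith

/-- Subadditivity of `negMulLog` on `[0,1]`. -/
private lemma negMulLog_add_le' {x t : ℝ} (hx : 0 ≤ x) (ht : 0 ≤ t) (h1 : x + t ≤ 1) :
    negMulLog (x + t) ≤ negMulLog x + negMulLog t := by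
  rcases eq_or_lt_of_le hx with rfl | hx0
  · simp
  rcases eq_or_lt_of_le ht with rfl | ht0
  · simp
  have l1 : log x ≤ log (x + t) := Real.log_le_log hx0 (by linarith)
  have l2 : log t ≤ log (x + t) := Real.log_le_log ht0 (by linarith)
  simp only [negMulLog, neg_mul]
  nlinarith

/-- Main estimate in natural log. -/
private lemma negMulLog_key {x t : ℝ} (hx : 0 ≤ x) (ht : 0 ≤ t) (h1 : x + t ≤ 1)
    (ht2 : t ≤ 1 / 2) :
    |negMulLog (x + t) - negMulLog x| ≤ negMulLog t := by
  rw [abs_sub_le_iff]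
  refine ⟨by linarith [negMulLog_add_le' hx ht h1], ?_⟩
  rcases eq_or_lt_of_le ht with rfl | ht0
  · simp
  have h2 : negMulLog x - negMulLog (x + t) ≤ negMulLog (1 - t) - negMulLog ((1 - t) + t) :=
    negMulLog_sub_le_sub hx (by linarith) ht
  have h3 : negMulLog ((1 - t) + t) = 0 := by norm_num
  have h4 := negMulLog_one_sub_le ht0 ht2
  linarith

/-- Continuity estimate for `f x = -x·log₂ x` (with `f 0 = 0`): for `x, y ∈ [0,1]` with
`|x - y| ≤ 1/2`, `|f x - f y| ≤ f |x - y|` (Csiszár–Körner Lemma 1.2.7). -/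
theorem abs_neg_mul_logb_sub_le (x y : ℝ)
    (hx : x ∈ Set.Icc (0 : ℝ) 1) (hy : y ∈ Set.Icc (0 : ℝ) 1)
    (hxy : |x - y| ≤ 1 / 2) :
    |(-x * Real.logb 2 x) - (-y * Real.logb 2 y)| ≤ -|x - y| * Real.logb 2 |x - y| := by
  have hlog2 : 0 < Real.log 2 := Real.log_pos (by norm_num)
  have expand : ∀ u : ℝ, -u * Real.logb 2 u = negMulLog u / Real.log 2 := by
    intro u
    simp only [Real.logb, negMulLog]
    ring
  have main : ∀ a b : ℝ, a ∈ Set.Icc (0:ℝ) 1 → b ∈ Set.Icc (0:ℝ) 1 → a ≤ b →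
      |a - b| ≤ 1 / 2 →
      |(-a * Real.logb 2 a) - (-b * Real.logb 2 b)| ≤ -|a - b| * Real.logb 2 |a - b| := by
    intro a b ha hb hab habs
    have ht : 0 ≤ b - a := by linarith
    have habst : |a - b| = b - a := by rw [abs_sub_comm, abs_of_nonneg ht]
    rw [habst] at habs ⊢
    have hk := negMulLog_key ha.1 ht (by linarith [hb.2]) habs
    rw [(by ring : a + (b - a) = b)] at hk
    rw [expand, expand, expand, div_sub_div_same, abs_div, abs_of_pos hlog2]
    have : |negMulLog a - negMulLog b| ≤ negMulLog (b - a) := by rwa [abs_sub_comm]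
    exact div_le_div_of_nonneg_right this hlog2.le
  rcases le_total x y with h | h
  · exact main x y hx hy h hxy
  · have := main y x hy hx h (by rwa [abs_sub_comm])
    rwa [abs_sub_comm y x, abs_sub_comm ((-y) * Real.logb 2 y) _] at this
end

section
/- Let 𝒵 be a finite set, P a pmf on 𝒵 with full support, and define for pmfs Q₁, Q₂ on 𝒵 the relative entropies D(Qᵢ‖P). Then D(Q₁‖P) − D(Q₂‖P) = H(Q₂) − H(Q₁) − Σ_z (Q₁(z) − Q₂(z))·log₂ P(z), and consequently if ‖Q₁ − Q₂‖₁ ≤ 1/2 then |D(Q₁‖P) − D(Q₂‖P)| ≤ ‖Q₁−Q₂‖₁·log₂(|𝒵|/‖Q₁−Q₂‖₁) + ‖Q₁−Q₂‖₁·log₂(1/p_min), where p_min = min_z P(z). -/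
/-!
Expanding `log₂ (Q / P) = log₂ Q - log₂ P` gives the identity, so it remains to bound the entropy
difference and the cross term. Since `P z ∈ [p_min, 1]`, each `|log₂ P z|` is at most
`log₂ (1 / p_min)`. For the entropies, concavity of `η t = -t log t` makes the increment
`η (t + d) - η t` decreasing in `t`, so it lies between `-η (1 - d)` and `η d`; as
`η (1 - d) ≤ η d` for `d ≤ 1/2`, we get `|η x - η y| ≤ η |x - y|`. Summing and applying Jensen's
inequality to `η` bounds `∑ η |Q₁ z - Q₂ z|` by `δ log (|𝒵| / δ)` with `δ = ‖Q₁ - Q₂‖₁`.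
-/

open Real Finset

theorem ConvexOn.map_add_sub_map_le_of_le {s : Set ℝ} {f : ℝ → ℝ} (hf : ConvexOn ℝ s f)
    {a b d : ℝ} (ha : a ∈ s) (hbd : b + d ∈ s) (hab : a ≤ b) (hd : 0 ≤ d) :
    f (a + d) - f a ≤ f (b + d) - f b := by
  rcases hd.eq_or_lt with rfl | hd
  · simp
  have had : a + d ∈ s := hf.1.ordConnected.out ha hbd ⟨by linarith, by linarith⟩
  have hb : b ∈ s := hf.1.ordConnected.out ha hbd ⟨hab, by linarith⟩
  -- compare secant slopes over `[a, a + d]`, `[a, b + d]` and `[b, b + d]`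
  have h₁ := hf.secant_mono ha had hbd (by linarith) (by linarith) (by linarith)
  have h₂ := hf.secant_mono hbd ha hb (by linarith) (by linarith) hab
  rw [add_sub_cancel_left] at h₁
  rw [← neg_sub (f (b + d)), ← neg_sub (b + d) a, neg_div_neg_eq, ← neg_sub (f (b + d)),
    ← neg_sub (b + d) b, neg_div_neg_eq, add_sub_cancel_left] at h₂
  exact (div_le_div_iff_of_pos_right hd).1 (h₁.trans h₂)

theorem ConcaveOn.map_add_sub_map_le_of_le {s : Set ℝ} {f : ℝ → ℝ} (hf : ConcaveOn ℝ s f)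
    {a b d : ℝ} (ha : a ∈ s) (hbd : b + d ∈ s) (hab : a ≤ b) (hd : 0 ≤ d) :
    f (b + d) - f b ≤ f (a + d) - f a := by
  have := hf.neg.map_add_sub_map_le_of_le ha hbd hab hd
  simp only [Pi.neg_apply] at this
  linarith

namespace Real

lemma concaveOn_negMulLog_sub_negMulLog_one_sub :
    ConcaveOn ℝ (Set.Icc 0 (1 / 2)) fun t ↦ negMulLog t - negMulLog (1 - t) := by
  refine concaveOn_of_hasDerivWithinAt2_nonpos (convex_Icc _ _) (by fun_prop)
    (f' := fun t ↦ -log t - log (1 - t) - 2) (f'' := fun t ↦ -t⁻¹ + (1 - t)⁻¹) ?_ ?_ ?_ <;>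
    rw [interior_Icc] <;> intro t ⟨ht₀, ht⟩ <;> have ht₁ : 0 < 1 - t := by linarith
  · have := (hasDerivAt_negMulLog ht₀.ne').sub
      ((hasDerivAt_negMulLog ht₁.ne').comp t ((hasDerivAt_id t).const_sub 1))
    exact (this.congr_deriv (by ring)).hasDerivWithinAt
  · have := ((hasDerivAt_log ht₀.ne').neg.sub
      ((hasDerivAt_log ht₁.ne').comp t ((hasDerivAt_id t).const_sub 1))).sub_const 2
    exact (this.congr_deriv (by ring)).hasDerivWithinAt
  · have : (1 - t)⁻¹ ≤ t⁻¹ := inv_anti₀ ht₀ (by linarith)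
    linarith

lemma negMulLog_one_sub_le {d : ℝ} (h₀ : 0 ≤ d) (h : d ≤ 1 / 2) :
    negMulLog (1 - d) ≤ negMulLog d := by
  have := concaveOn_negMulLog_sub_negMulLog_one_sub.ge_on_segment (x := 0) (y := 1 / 2)
    (by norm_num) (by norm_num) (by rw [segment_eq_Icc (by norm_num)]; exact ⟨h₀, h⟩)
  norm_num at this
  linarith

lemma abs_negMulLog_sub_le {x y : ℝ} (hx : x ∈ Set.Icc 0 1) (hy : y ∈ Set.Icc 0 1)
    (hxy : |x - y| ≤ 1 / 2) : |negMulLog x - negMulLog y| ≤ negMulLog |x - y| := by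
  wlog hyx : y ≤ x generalizing x y
  · rw [abs_sub_comm, abs_sub_comm x]
    exact this hy hx (by rwa [abs_sub_comm]) (by linarith)
  obtain ⟨d, hd, rfl⟩ : ∃ d, 0 ≤ d ∧ x = y + d := ⟨x - y, by linarith, by ring⟩
  rw [add_sub_cancel_left, abs_of_nonneg hd] at hxy ⊢
  have hmem (t : ℝ) (ht : 0 ≤ t) : t ∈ Set.Ici (0 : ℝ) := ht
  have upper := concaveOn_negMulLog.map_add_sub_map_le_of_le (hmem 0 le_rfl) (hmem _ hx.1)
    hy.1 hd
  have lower := concaveOn_negMulLog.map_add_sub_map_le_of_le hy.1 (hmem (1 - d + d) (by simp))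
    (by linarith [hx.2]) hd
  have hsymm := negMulLog_one_sub_le hd hxy
  simp only [zero_add, negMulLog_zero, sub_zero, sub_add_cancel, negMulLog_one] at upper lower
  rw [abs_le]
  constructor <;> linarith

lemma sum_negMulLog_le {ι : Type*} (s : Finset ι) {d : ι → ℝ} (hd : ∀ i ∈ s, 0 ≤ d i) :
    ∑ i ∈ s, negMulLog (d i) ≤ (∑ i ∈ s, d i) * log (#s / ∑ i ∈ s, d i) := by
  rcases s.eq_empty_or_nonempty with rfl | hs
  · simp
  have hn : (0 : ℝ) < #s := by exact_mod_cast hs.card_pos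
  have jensen := concaveOn_negMulLog.le_map_sum (t := s) (w := fun _ ↦ (#s : ℝ)⁻¹)
    (fun _ _ ↦ by positivity) (by simp [hn.ne']) hd
  simp only [smul_eq_mul, ← mul_sum] at jensen
  have hlog : log (#s / ∑ i ∈ s, d i) = -log ((#s : ℝ)⁻¹ * ∑ i ∈ s, d i) := by
    rw [← log_inv, mul_inv, inv_inv, div_eq_mul_inv]
  calc ∑ i ∈ s, negMulLog (d i) = #s * ((#s : ℝ)⁻¹ * ∑ i ∈ s, negMulLog (d i)) := by
        field_simp
    _ ≤ #s * negMulLog ((#s : ℝ)⁻¹ * ∑ i ∈ s, d i) := by gcongr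
    _ = (∑ i ∈ s, d i) * log (#s / ∑ i ∈ s, d i) := by
        rw [hlog, negMulLog]
        field_simp

lemma abs_sum_negMulLog_sub_le {ι : Type*} (s : Finset ι) {x y : ι → ℝ}
    (hx : ∀ i ∈ s, x i ∈ Set.Icc 0 1) (hy : ∀ i ∈ s, y i ∈ Set.Icc 0 1)
    (hxy : ∀ i ∈ s, |x i - y i| ≤ 1 / 2) :
    |∑ i ∈ s, negMulLog (x i) - ∑ i ∈ s, negMulLog (y i)| ≤
      (∑ i ∈ s, |x i - y i|) * log (#s / ∑ i ∈ s, |x i - y i|) :=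
  calc |∑ i ∈ s, negMulLog (x i) - ∑ i ∈ s, negMulLog (y i)|
      ≤ ∑ i ∈ s, |negMulLog (x i) - negMulLog (y i)| := by
        rw [← sum_sub_distrib]
        exact abs_sum_le_sum_abs _ _
    _ ≤ ∑ i ∈ s, negMulLog |x i - y i| :=
        sum_le_sum fun i hi ↦ abs_negMulLog_sub_le (hx i hi) (hy i hi) (hxy i hi)
    _ ≤ _ := sum_negMulLog_le s fun _ _ ↦ abs_nonneg _

lemma mul_logb_self (b x : ℝ) : x * logb b x = -negMulLog x / log b := by
  rw [negMulLog, logb]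
  ring

lemma abs_sum_mul_logb_self_sub_le {b : ℝ} (hb : 1 < b) {ι : Type*} (s : Finset ι)
    {x y : ι → ℝ} (hx : ∀ i ∈ s, x i ∈ Set.Icc 0 1) (hy : ∀ i ∈ s, y i ∈ Set.Icc 0 1)
    (hxy : ∀ i ∈ s, |x i - y i| ≤ 1 / 2) :
    |∑ i ∈ s, x i * logb b (x i) - ∑ i ∈ s, y i * logb b (y i)| ≤
      (∑ i ∈ s, |x i - y i|) * logb b (#s / ∑ i ∈ s, |x i - y i|) := by
  have hlog : 0 < log b := log_pos hb
  have hdiff : ∑ i ∈ s, x i * logb b (x i) - ∑ i ∈ s, y i * logb b (y i) =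
      (∑ i ∈ s, negMulLog (y i) - ∑ i ∈ s, negMulLog (x i)) / log b := by
    simp only [mul_logb_self, ← sum_div, sum_neg_distrib]
    ring
  rw [hdiff, abs_div, abs_of_pos hlog, abs_sub_comm, logb, ← mul_div_assoc]
  gcongr
  exact abs_sum_negMulLog_sub_le s hx hy hxy

lemma mul_logb_div (b x : ℝ) {y : ℝ} (hy : y ≠ 0) :
    x * logb b (x / y) = x * logb b x - x * logb b y := by
  rcases eq_or_ne x 0 with rfl | hx
  · simp
  rw [logb_div hx hy, mul_sub]

lemma abs_logb_le_logb_one_div {b m p : ℝ} (hb : 1 < b) (hm : 0 < m) (hmp : m ≤ p) (hp : p ≤ 1) :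
    |logb b p| ≤ logb b (1 / m) := by
  rw [abs_of_nonpos (logb_nonpos hb (hm.trans_le hmp).le hp), one_div, logb_inv, neg_le_neg_iff]
  exact logb_le_logb_of_le hb hm hmp

lemma abs_sum_mul_logb_le {b m : ℝ} (hb : 1 < b) (hm : 0 < m) {ι : Type*} (s : Finset ι)
    (c : ι → ℝ) {p : ι → ℝ} (hp : ∀ i ∈ s, p i ∈ Set.Icc m 1) :
    |∑ i ∈ s, c i * logb b (p i)| ≤ (∑ i ∈ s, |c i|) * logb b (1 / m) :=
  calc |∑ i ∈ s, c i * logb b (p i)| ≤ ∑ i ∈ s, |c i * logb b (p i)| := abs_sum_le_sum_abs _ _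
    _ ≤ ∑ i ∈ s, |c i| * logb b (1 / m) := sum_le_sum fun i hi ↦ by
        rw [abs_mul]
        exact mul_le_mul_of_nonneg_left
          (abs_logb_le_logb_one_div hb hm (hp i hi).1 (hp i hi).2) (abs_nonneg _)
    _ = (∑ i ∈ s, |c i|) * logb b (1 / m) := (sum_mul ..).symm

end Real

lemma Finset.mem_Icc_zero_one_of_sum_eq_one {ι : Type*} {s : Finset ι} {f : ι → ℝ}
    (hf : ∀ i ∈ s, 0 ≤ f i) (h₁ : ∑ i ∈ s, f i = 1) {i : ι} (hi : i ∈ s) :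
    f i ∈ Set.Icc 0 1 :=
  ⟨hf i hi, h₁ ▸ single_le_sum hf hi⟩

theorem relEntropy_continuity_general
    {Z : Type*} [Fintype Z]
    (P Q₁ Q₂ : Z → ℝ)
    (hPpos : ∀ z, 0 < P z) (hP1 : ∑ z, P z = 1)
    (hQ₁0 : ∀ z, 0 ≤ Q₁ z) (hQ₁1 : ∑ z, Q₁ z = 1)
    (hQ₂0 : ∀ z, 0 ≤ Q₂ z) (hQ₂1 : ∑ z, Q₂ z = 1)
    (pmin : ℝ) (hpmin : IsLeast (Set.range P) pmin) :
    ((∑ z, Q₁ z * Real.logb 2 (Q₁ z / P z)) - (∑ z, Q₂ z * Real.logb 2 (Q₂ z / P z)) =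
      (-∑ z, Q₂ z * Real.logb 2 (Q₂ z)) - (-∑ z, Q₁ z * Real.logb 2 (Q₁ z)) -
        ∑ z, (Q₁ z - Q₂ z) * Real.logb 2 (P z)) ∧
    (∑ z, |Q₁ z - Q₂ z| ≤ 1 / 2 →
      |(∑ z, Q₁ z * Real.logb 2 (Q₁ z / P z)) - ∑ z, Q₂ z * Real.logb 2 (Q₂ z / P z)| ≤
        (∑ z, |Q₁ z - Q₂ z|) * Real.logb 2 ((Fintype.card Z : ℝ) / ∑ z, |Q₁ z - Q₂ z|) +
        (∑ z, |Q₁ z - Q₂ z|) * Real.logb 2 (1 / pmin)) := by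
  have identity : (∑ z, Q₁ z * logb 2 (Q₁ z / P z)) - (∑ z, Q₂ z * logb 2 (Q₂ z / P z)) =
      (-∑ z, Q₂ z * logb 2 (Q₂ z)) - (-∑ z, Q₁ z * logb 2 (Q₁ z)) -
        ∑ z, (Q₁ z - Q₂ z) * logb 2 (P z) := by
    simp only [mul_logb_div _ _ (hPpos _).ne', sum_sub_distrib, sub_mul]
    ring
  refine ⟨identity, fun hclose ↦ ?_⟩
  have hQ₁ (z) (hz : z ∈ univ) := mem_Icc_zero_one_of_sum_eq_one (fun z _ ↦ hQ₁0 z) hQ₁1 hz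
  have hQ₂ (z) (hz : z ∈ univ) := mem_Icc_zero_one_of_sum_eq_one (fun z _ ↦ hQ₂0 z) hQ₂1 hz
  have hQ₁₂ (z) (hz : z ∈ univ) : |Q₁ z - Q₂ z| ≤ 1 / 2 :=
    (single_le_sum (fun z _ ↦ abs_nonneg (Q₁ z - Q₂ z)) hz).trans hclose
  have hP (z) (hz : z ∈ univ) : P z ∈ Set.Icc pmin 1 :=
    ⟨hpmin.2 ⟨z, rfl⟩, (mem_Icc_zero_one_of_sum_eq_one (fun z _ ↦ (hPpos z).le) hP1 hz).2⟩
  obtain ⟨z₀, rfl⟩ := hpmin.1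
  rw [identity, neg_sub_neg, ← card_univ]
  exact (abs_sub _ _).trans <| add_le_add
    (abs_sum_mul_logb_self_sub_le one_lt_two univ hQ₁ hQ₂ hQ₁₂)
    (abs_sum_mul_logb_le one_lt_two (hPpos z₀) univ _ hP)

/-- Continuity of relative entropy in its first argument: the identity
`D(Q₁‖P) − D(Q₂‖P) = H(Q₂) − H(Q₁) − Σ (Q₁−Q₂) log₂ P`, and under `‖Q₁−Q₂‖₁ ≤ 1/2`,
`|D(Q₁‖P) − D(Q₂‖P)| ≤ ‖Q₁−Q₂‖₁·log₂(|𝒵|/‖Q₁−Q₂‖₁) + ‖Q₁−Q₂‖₁·log₂(1/p_min)`. -/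
theorem relEntropy_continuity
    {Z : Type*} [Fintype Z] [Nonempty Z]
    (P Q₁ Q₂ : Z → ℝ)
    (hPpos : ∀ z, 0 < P z) (hP1 : ∑ z, P z = 1)
    (hQ₁0 : ∀ z, 0 ≤ Q₁ z) (hQ₁1 : ∑ z, Q₁ z = 1)
    (hQ₂0 : ∀ z, 0 ≤ Q₂ z) (hQ₂1 : ∑ z, Q₂ z = 1)
    (pmin : ℝ) (hpmin : IsLeast (Set.range P) pmin) :
    ((∑ z, Q₁ z * Real.logb 2 (Q₁ z / P z)) - (∑ z, Q₂ z * Real.logb 2 (Q₂ z / P z)) =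
      (-∑ z, Q₂ z * Real.logb 2 (Q₂ z)) - (-∑ z, Q₁ z * Real.logb 2 (Q₁ z)) -
        ∑ z, (Q₁ z - Q₂ z) * Real.logb 2 (P z)) ∧
    (∑ z, |Q₁ z - Q₂ z| ≤ 1 / 2 →
      |(∑ z, Q₁ z * Real.logb 2 (Q₁ z / P z)) - ∑ z, Q₂ z * Real.logb 2 (Q₂ z / P z)| ≤
        (∑ z, |Q₁ z - Q₂ z|) * Real.logb 2 ((Fintype.card Z : ℝ) / ∑ z, |Q₁ z - Q₂ z|) +
        (∑ z, |Q₁ z - Q₂ z|) * Real.logb 2 (1 / pmin)) :=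
  relEntropy_continuity_general P Q₁ Q₂ hPpos hP1 hQ₁0 hQ₁1 hQ₂0 hQ₂1 pmin hpmin
end

section
/- Let 𝒜(wⁿ) be a finite set of size A, and for each xⁿ in a finite set 𝒯 of size at most exp₂(n·H), let 𝒜(xⁿ,wⁿ) ⊆ 𝒜(wⁿ) have size at least A·exp₂(−n·I)·(n+1)^{−c} for constants I ≥ 0, H ≥ 0, c ≥ 0. If Z₁, …, Z_M are drawn i.i.d. uniformly from 𝒜(wⁿ) with M·(n+1)^{−c}·exp₂(−nI) ≥ (n+1)^4 and exp₂(nH − (n+1)^4·log₂ e) < 1, then the expected number of xⁿ ∈ 𝒯 not covered (i.e., with 𝒜(xⁿ,wⁿ) ∩ {Z₁,…,Z_M} = ∅) is strictly less than 1; hence there exists a deterministic choice of M points covering every xⁿ ∈ 𝒯. -/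
open Finset

/-- Abstract random-coding covering argument (core of the type covering lemma): if each
set `B t ⊆ 𝒜` is large enough and `M` i.i.d. uniform picks from `𝒜` are made, the expected
number of uncovered `t ∈ T` is `< 1`, so some deterministic choice covers every `t ∈ T`. -/
theorem random_covering
    {β γ : Type*} [DecidableEq β] [Fintype γ] [DecidableEq γ]
    (𝒜 : Finset β) (h𝒜 : 𝒜.Nonempty)
    (T : Finset γ) (B : γ → Finset β) (hB : ∀ t ∈ T, B t ⊆ 𝒜)
    (n M : ℕ) (H I c : ℝ) (hH : 0 ≤ H) (hI : 0 ≤ I) (hc : 0 ≤ c)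
    (hT : (T.card : ℝ) ≤ (2 : ℝ) ^ ((n : ℝ) * H))
    (hBsize : ∀ t ∈ T,
      (𝒜.card : ℝ) * (2 : ℝ) ^ (-(n : ℝ) * I) * ((n : ℝ) + 1) ^ (-(c : ℝ)) ≤ ((B t).card : ℝ))
    (hM : ((n : ℝ) + 1) ^ (4 : ℝ) ≤ (M : ℝ) * ((n : ℝ) + 1) ^ (-(c : ℝ)) * (2 : ℝ) ^ (-(n : ℝ) * I))
    (hn : (2 : ℝ) ^ ((n : ℝ) * H - ((n : ℝ) + 1) ^ (4 : ℝ) * Real.logb 2 (Real.exp 1)) < 1) :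
    ((1 : ℝ) / (𝒜.card : ℝ) ^ M) *
        (∑ z : Fin M → {x // x ∈ 𝒜},
          ((T.filter (fun t => ∀ j : Fin M, (z j : β) ∉ B t)).card : ℝ)) < 1 ∧
      ∃ z : Fin M → {x // x ∈ 𝒜}, ∀ t ∈ T, ∃ j : Fin M, (z j : β) ∈ B t := by
  classical
  have hN : 0 < 𝒜.card := Finset.card_pos.mpr h𝒜
  have hNR : (0 : ℝ) < (𝒜.card : ℝ) := by exact_mod_cast hN
  have hNpow : (0 : ℝ) < (𝒜.card : ℝ) ^ M := pow_pos hNR M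
  -- Step 1: counting
  have hcount : (∑ z : Fin M → {x // x ∈ 𝒜},
      ((T.filter (fun t => ∀ j : Fin M, (z j : β) ∉ B t)).card))
      = ∑ t ∈ T, (𝒜.card - (B t).card) ^ M := by
    have h1 : (∑ z : Fin M → {x // x ∈ 𝒜},
        ((T.filter (fun t => ∀ j : Fin M, (z j : β) ∉ B t)).card))
        = ∑ z : Fin M → {x // x ∈ 𝒜}, ∑ t ∈ T,
            (if (∀ j : Fin M, (z j : β) ∉ B t) then 1 else 0) := by
      refine Finset.sum_congr rfl fun z _ => ?_
      rw [Finset.card_filter]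
    rw [h1, Finset.sum_comm]
    refine Finset.sum_congr rfl fun t ht => ?_
    have h2 : (∑ z : Fin M → {x // x ∈ 𝒜},
        (if (∀ j : Fin M, (z j : β) ∉ B t) then 1 else 0))
        = (Finset.univ.filter fun z : Fin M → {x // x ∈ 𝒜} =>
            ∀ j : Fin M, (z j : β) ∉ B t).card := by
      rw [Finset.card_filter]
    rw [h2]
    have h3 : (Finset.univ.filter fun z : Fin M → {x // x ∈ 𝒜} =>
        ∀ j : Fin M, (z j : β) ∉ B t)
        = Fintype.piFinset (fun _ : Fin M =>
            Finset.univ.filter fun x : {x // x ∈ 𝒜} => (x : β) ∉ B t) := by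
      ext z
      simp [Fintype.mem_piFinset]
    rw [h3, Fintype.card_piFinset]
    have h4 : (Finset.univ.filter fun x : {x // x ∈ 𝒜} => (x : β) ∉ B t).card
        = (𝒜 \ B t).card := by
      refine Finset.card_bij (fun x _ => (x : β)) ?_ ?_ ?_
      · intro x hx
        simp only [Finset.mem_filter, Finset.mem_univ, true_and] at hx
        exact Finset.mem_sdiff.mpr ⟨x.2, hx⟩
      · intro x _ y _ hxy
        exact Subtype.ext hxy
      · intro a ha
        rw [Finset.mem_sdiff] at ha
        exact ⟨⟨a, ha.1⟩, by simp [ha.2], rfl⟩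
    rw [Finset.prod_const]
    rw [h4, Finset.card_sdiff_of_subset (hB t ht)]
    simp
  -- Step 2: key exponential bound
  have hexp : (2 : ℝ) ^ ((n : ℝ) * H) * Real.exp (-(((n : ℝ) + 1) ^ (4 : ℝ))) < 1 := by
    have h2pos : (0 : ℝ) < 2 := by norm_num
    have heq : (2 : ℝ) ^ ((n : ℝ) * H - ((n : ℝ) + 1) ^ (4 : ℝ) * Real.logb 2 (Real.exp 1))
        = (2 : ℝ) ^ ((n : ℝ) * H) * Real.exp (-(((n : ℝ) + 1) ^ (4 : ℝ))) := by
      have h1 : (2 : ℝ) ^ (Real.logb 2 (Real.exp 1) * (((n : ℝ) + 1) ^ (4 : ℝ)))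
          = Real.exp (((n : ℝ) + 1) ^ (4 : ℝ)) := by
        rw [Real.rpow_mul (by norm_num : (0:ℝ) ≤ 2),
          Real.rpow_logb h2pos (by norm_num) (Real.exp_pos 1), Real.exp_one_rpow]
      rw [Real.rpow_sub h2pos,
        mul_comm (((n : ℝ) + 1) ^ (4 : ℝ)) (Real.logb 2 (Real.exp 1)), h1,
        div_eq_mul_inv, ← Real.exp_neg]
    rw [heq] at hn
    exact hn
  -- per-term bound
  have hterm : ∀ t ∈ T, (((𝒜.card - (B t).card : ℕ) : ℝ)) ^ M
      ≤ (𝒜.card : ℝ) ^ M * Real.exp (-(((n : ℝ) + 1) ^ (4 : ℝ))) := by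
    intro t ht
    have hble : (B t).card ≤ 𝒜.card := Finset.card_le_card (hB t ht)
    have hcast : (((𝒜.card - (B t).card : ℕ) : ℝ)) = (𝒜.card : ℝ) - ((B t).card : ℝ) :=
      Nat.cast_sub hble
    set q : ℝ := ((B t).card : ℝ) / (𝒜.card : ℝ) with hq
    have hq0 : 0 ≤ q := by positivity
    have hq1 : q ≤ 1 := by
      rw [hq, div_le_one hNR]; exact_mod_cast hble
    have hfact : (𝒜.card : ℝ) - ((B t).card : ℝ) = (𝒜.card : ℝ) * (1 - q) := by
      rw [hq]; field_simp
    have hqlb : (2 : ℝ) ^ (-(n : ℝ) * I) * ((n : ℝ) + 1) ^ (-(c : ℝ)) ≤ q := by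
      rw [hq, le_div_iff₀ hNR]
      have := hBsize t ht
      linarith [this]
    have hMq : (((n : ℝ) + 1) ^ (4 : ℝ)) ≤ (M : ℝ) * q := by
      calc (((n : ℝ) + 1) ^ (4 : ℝ))
          ≤ (M : ℝ) * (((n : ℝ) + 1) ^ (-(c : ℝ)) * (2 : ℝ) ^ (-(n : ℝ) * I)) := by
            rw [← mul_assoc]; exact hM
        _ ≤ (M : ℝ) * q := by
            refine mul_le_mul_of_nonneg_left ?_ (Nat.cast_nonneg M)
            rw [mul_comm]; exact hqlb
    have h1q : 1 - q ≤ Real.exp (-q) := by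
      have := Real.add_one_le_exp (-q)
      linarith
    have hpow1 : (1 - q) ^ M ≤ Real.exp (-q) ^ M :=
      pow_le_pow_left₀ (by linarith) h1q M
    have hpow2 : Real.exp (-q) ^ M = Real.exp (-(M : ℝ) * q) := by
      rw [← Real.exp_nat_mul]; ring_nf
    have hpow3 : Real.exp (-(M : ℝ) * q) ≤ Real.exp (-(((n : ℝ) + 1) ^ (4 : ℝ))) := by
      apply Real.exp_le_exp.mpr
      nlinarith
    calc (((𝒜.card - (B t).card : ℕ) : ℝ)) ^ M
        = ((𝒜.card : ℝ) * (1 - q)) ^ M := by rw [hcast, hfact]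
      _ = (𝒜.card : ℝ) ^ M * (1 - q) ^ M := mul_pow _ _ M
      _ ≤ (𝒜.card : ℝ) ^ M * Real.exp (-(((n : ℝ) + 1) ^ (4 : ℝ))) := by
          refine mul_le_mul_of_nonneg_left ?_ (le_of_lt hNpow)
          calc (1 - q) ^ M ≤ Real.exp (-q) ^ M := hpow1
            _ = Real.exp (-(M : ℝ) * q) := hpow2
            _ ≤ _ := hpow3
  -- the real sum is < N^M
  have hsum : (∑ z : Fin M → {x // x ∈ 𝒜},
      ((T.filter (fun t => ∀ j : Fin M, (z j : β) ∉ B t)).card : ℝ)) < (𝒜.card : ℝ) ^ M := by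
    have hc1 : (∑ z : Fin M → {x // x ∈ 𝒜},
        ((T.filter (fun t => ∀ j : Fin M, (z j : β) ∉ B t)).card : ℝ))
        = ((∑ t ∈ T, (𝒜.card - (B t).card) ^ M : ℕ) : ℝ) := by
      rw [← hcount]; push_cast; ring
    rw [hc1]
    push_cast
    calc (∑ t ∈ T, (((𝒜.card - (B t).card : ℕ) : ℝ)) ^ M)
        ≤ ∑ t ∈ T, (𝒜.card : ℝ) ^ M * Real.exp (-(((n : ℝ) + 1) ^ (4 : ℝ))) :=
          Finset.sum_le_sum hterm
      _ = (T.card : ℝ) * ((𝒜.card : ℝ) ^ M * Real.exp (-(((n : ℝ) + 1) ^ (4 : ℝ)))) := by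
          rw [Finset.sum_const, nsmul_eq_mul]
      _ ≤ (2 : ℝ) ^ ((n : ℝ) * H) * ((𝒜.card : ℝ) ^ M * Real.exp (-(((n : ℝ) + 1) ^ (4 : ℝ)))) := by
          refine mul_le_mul_of_nonneg_right hT (by positivity)
      _ = ((2 : ℝ) ^ ((n : ℝ) * H) * Real.exp (-(((n : ℝ) + 1) ^ (4 : ℝ)))) * (𝒜.card : ℝ) ^ M := by
          ring
      _ < 1 * (𝒜.card : ℝ) ^ M := by
          exact mul_lt_mul_of_pos_right hexp hNpow
      _ = (𝒜.card : ℝ) ^ M := one_mul _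
  constructor
  · rw [one_div, inv_mul_lt_one₀ hNpow]
    exact hsum
  · -- nat version
    have hnat : (∑ z : Fin M → {x // x ∈ 𝒜},
        ((T.filter (fun t => ∀ j : Fin M, (z j : β) ∉ B t)).card)) < 𝒜.card ^ M := by
      have : ((∑ z : Fin M → {x // x ∈ 𝒜},
          ((T.filter (fun t => ∀ j : Fin M, (z j : β) ∉ B t)).card) : ℕ) : ℝ)
          < ((𝒜.card ^ M : ℕ) : ℝ) := by
        push_cast
        exact hsum
      exact_mod_cast this
    by_contra hcon
    push_neg at hcon
    have hge : 𝒜.card ^ M ≤ (∑ z : Fin M → {x // x ∈ 𝒜},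
        ((T.filter (fun t => ∀ j : Fin M, (z j : β) ∉ B t)).card)) := by
      have hcardfun : Fintype.card (Fin M → {x // x ∈ 𝒜}) = 𝒜.card ^ M := by
        simp [Fintype.card_fun]
      calc 𝒜.card ^ M = ∑ _z : Fin M → {x // x ∈ 𝒜}, 1 := by
            rw [Finset.sum_const, smul_eq_mul, mul_one, Finset.card_univ, hcardfun]
        _ ≤ ∑ z : Fin M → {x // x ∈ 𝒜},
              ((T.filter (fun t => ∀ j : Fin M, (z j : β) ∉ B t)).card) := by
            refine Finset.sum_le_sum fun z _ => ?_
            obtain ⟨t, ht, hzt⟩ := hcon z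
            have hmem : t ∈ T.filter (fun t => ∀ j : Fin M, (z j : β) ∉ B t) :=
              Finset.mem_filter.mpr ⟨ht, hzt⟩
            exact Finset.card_pos.mpr ⟨t, hmem⟩
    exact absurd hnat (not_lt.mpr hge)
end

section
/- Let Q and P be pmfs on a finite set 𝒵 with Q absolutely continuous w.r.t. P, and let 𝒟ₙ ⊆ 𝒵ⁿ be any event with Qⁿ(𝒟ₙ) ≥ 1 − β for some β ∈ [0, 1). Then Pⁿ(𝒟ₙ) ≥ exp₂( −(n·D(Q‖P) + h₂(β)) / (1 − β) ), where h₂ is the binary entropy function (in bits) and D(Q‖P) is relative entropy in bits. -/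
/-!
Write `q = Qⁿ(𝒟ₙ)` and `p = Pⁿ(𝒟ₙ)`. The log-sum inequality on `𝒟ₙ` and on its complement
bounds the binary divergence `q log (q/p) + (1-q) log ((1-q)/(1-p))` by `D(Qⁿ‖Pⁿ) = n·D(Q‖P)`;
since `1 - p ≤ 1` the second term is at least `(1-q) log (1-q)`, whence
`q·(-log p) ≤ n·D(Q‖P) + h(q)`. As `h` is concave with `h(0) = 0`, `h(q)/q` decreases in `q`,
so `q ≥ 1 - β` gives `-log p ≤ (n·D(Q‖P) + h(β))/(1 - β)`.
-/

open Finset Real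

lemma sum_eq_zero_of_sum_eq_zero {ι : Type*} {s : Finset ι} {a b : ι → ℝ}
    (hb : ∀ i ∈ s, 0 ≤ b i) (hab : ∀ i ∈ s, b i = 0 → a i = 0) (h : ∑ i ∈ s, b i = 0) :
    ∑ i ∈ s, a i = 0 :=
  sum_eq_zero fun i hi => hab i hi ((sum_eq_zero_iff_of_nonneg hb).1 h i hi)

lemma mul_log_add_sub_mul_le_mul_log_div {a b r : ℝ} (ha : 0 ≤ a) (hr : 0 < r)
    (hab : b = 0 → a = 0) (hb : 0 ≤ b) :
    a * log r + a - b * r ≤ a * log (a / b) := by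
  rcases ha.eq_or_lt with rfl | ha
  · simpa using mul_nonneg hb hr.le
  have hb : 0 < b := hb.lt_of_ne fun h => ha.ne' (hab h.symm)
  have key := one_sub_inv_le_log_of_pos (show 0 < a / (b * r) by positivity)
  calc a * log r + a - b * r = a * log r + a * (1 - (a / (b * r))⁻¹) := by
        field_simp
        ring
    _ ≤ a * log r + a * log (a / (b * r)) := by gcongr
    _ = a * log (a / b) := by
        rw [← mul_add, div_mul_eq_div_div, log_div (by positivity) hr.ne']
        ring

/-- The log-sum inequality. -/
theorem sum_mul_log_div_sum_le {ι : Type*} (s : Finset ι) {a b : ι → ℝ}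
    (ha : ∀ i ∈ s, 0 ≤ a i) (hb : ∀ i ∈ s, 0 ≤ b i) (hab : ∀ i ∈ s, b i = 0 → a i = 0) :
    (∑ i ∈ s, a i) * log ((∑ i ∈ s, a i) / ∑ i ∈ s, b i) ≤
      ∑ i ∈ s, a i * log (a i / b i) := by
  rcases (sum_nonneg ha).eq_or_lt with hA | hA
  · have ha0 : ∀ i ∈ s, a i = 0 := (sum_eq_zero_iff_of_nonneg ha).1 hA.symm
    rw [← hA, zero_mul]
    exact (sum_eq_zero fun i hi => by rw [ha0 i hi, zero_mul]).ge
  have hB : 0 < ∑ i ∈ s, b i :=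
    (sum_nonneg hb).lt_of_ne fun hB => hA.ne' (sum_eq_zero_of_sum_eq_zero hb hab hB.symm)
  set r := (∑ i ∈ s, a i) / ∑ i ∈ s, b i
  calc (∑ i ∈ s, a i) * log r
      = ∑ i ∈ s, (a i * log r + a i - b i * r) := by
        rw [sum_sub_distrib, sum_add_distrib, ← sum_mul, ← sum_mul, mul_div_cancel₀ _ hB.ne']
        ring
    _ ≤ ∑ i ∈ s, a i * log (a i / b i) := sum_le_sum fun i hi =>
        mul_log_add_sub_mul_le_mul_log_div (ha i hi) (div_pos hA hB) (hab i hi) (hb i hi)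

theorem sum_mul_log_div_nonneg {α : Type*} [Fintype α] {a b : α → ℝ} (ha : ∀ i, 0 ≤ a i)
    (hb : ∀ i, 0 ≤ b i) (ha1 : ∑ i, a i = 1) (hb1 : ∑ i, b i = 1)
    (hab : ∀ i, b i = 0 → a i = 0) : 0 ≤ ∑ i, a i * log (a i / b i) := by
  simpa [ha1, hb1] using sum_mul_log_div_sum_le univ (fun i _ => ha i) (fun i _ => hb i)
    fun i _ => hab i

lemma mul_log_le_mul_log_div {x y : ℝ} (hx : 0 ≤ x) (hy0 : 0 ≤ y) (hy1 : y ≤ 1)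
    (hxy : y = 0 → x = 0) : x * log x ≤ x * log (x / y) := by
  rcases hx.eq_or_lt with rfl | hx
  · simp
  have hy : 0 < y := hy0.lt_of_ne fun h => hx.ne' (hxy h.symm)
  rw [log_div hx.ne' hy.ne']
  have := log_nonpos hy0 hy1
  gcongr
  linarith

lemma mul_log_div_eq_sub {q p : ℝ} (hpq : p = 0 → q = 0) :
    q * log (q / p) = q * log q - q * log p := by
  rcases eq_or_ne q 0 with rfl | hq
  · simp
  rw [log_div hq fun hp => hq (hpq hp)]
  ring

theorem mul_neg_log_sum_le_add_binEntropy {α : Type*} [Fintype α] {a b : α → ℝ}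
    (ha : ∀ i, 0 ≤ a i) (hb : ∀ i, 0 ≤ b i) (ha1 : ∑ i, a i = 1) (hb1 : ∑ i, b i ≤ 1)
    (hab : ∀ i, b i = 0 → a i = 0) (s : Finset α) :
    (∑ i ∈ s, a i) * -log (∑ i ∈ s, b i) ≤
      ∑ i, a i * log (a i / b i) + binEntropy (∑ i ∈ s, a i) := by
  classical
  have hB := sum_mul_log_div_sum_le s (fun i _ => ha i) (fun i _ => hb i)
    (fun i _ => hab i)
  have hBc := sum_mul_log_div_sum_le sᶜ (fun i _ => ha i) (fun i _ => hb i)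
    (fun i _ => hab i)
  have hac : ∑ i ∈ sᶜ, a i = 1 - ∑ i ∈ s, a i := by
    rw [← ha1, ← sum_compl_add_sum s]; ring
  have hbc_le : ∑ i ∈ sᶜ, b i ≤ 1 := (sum_le_sum_of_subset_of_nonneg (subset_univ _)
    fun i _ _ => hb i).trans hb1
  have hcompl := mul_log_le_mul_log_div (sum_nonneg fun i (_ : i ∈ sᶜ) => ha i)
    (sum_nonneg fun i _ => hb i) hbc_le
    (sum_eq_zero_of_sum_eq_zero (fun i _ => hb i) fun i _ => hab i)
  rw [hac] at hcompl hBc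
  rw [mul_log_div_eq_sub (sum_eq_zero_of_sum_eq_zero (fun i _ => hb i) fun i _ => hab i)] at hB
  rw [← sum_compl_add_sum s, binEntropy]
  simp only [log_inv]
  linarith

lemma prod_eq_zero_of_prod_eq_zero {ι Z : Type*} [Fintype ι] {P Q : Z → ℝ}
    (hac : ∀ z, P z = 0 → Q z = 0) (ω : ι → Z) (h : ∏ i, P (ω i) = 0) : ∏ i, Q (ω i) = 0 :=
  have ⟨i, _, hi⟩ := prod_eq_zero_iff.1 h
  prod_eq_zero (mem_univ i) (hac _ hi)

section Product

variable {ι Z : Type*} [Fintype ι] [DecidableEq ι] [Fintype Z] {Q : Z → ℝ}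

lemma sum_prod_eq_one (hQ1 : ∑ z, Q z = 1) : ∑ ω : ι → Z, ∏ i, Q (ω i) = 1 := by
  rw [← Fintype.prod_sum fun (_ : ι) => Q, hQ1, prod_const_one]

lemma sum_prod_mul_apply (hQ1 : ∑ z, Q z = 1) (g : Z → ℝ) (j : ι) :
    ∑ ω : ι → Z, (∏ i, Q (ω i)) * g (ω j) = ∑ z, Q z * g z := by
  have hsplit : ∀ ω : ι → Z, (∏ i, Q (ω i)) * g (ω j) =
      ∏ i, Q (ω i) * (if i = j then g (ω i) else 1) := fun ω => by
    rw [prod_mul_distrib, prod_ite_eq', if_pos (mem_univ j)]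
  have hmarg : ∀ i,
      ∑ z, Q z * (if i = j then g z else 1) = if i = j then ∑ z, Q z * g z else 1 := fun i => by
    split_ifs <;> simp [hQ1]
  simp only [hsplit, ← Fintype.prod_sum fun i z => Q z * (if i = j then g z else 1), hmarg,
    prod_ite_eq', mem_univ, if_true]

theorem sum_prod_mul_log_div_prod (P : Z → ℝ) (hQ1 : ∑ z, Q z = 1)
    (hac : ∀ z, P z = 0 → Q z = 0) :
    ∑ ω : ι → Z, (∏ i, Q (ω i)) * log ((∏ i, Q (ω i)) / ∏ i, P (ω i)) =
      Fintype.card ι * ∑ z, Q z * log (Q z / P z) := by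
  have hterm : ∀ ω : ι → Z, (∏ i, Q (ω i)) * log ((∏ i, Q (ω i)) / ∏ i, P (ω i)) =
      ∑ j, (∏ i, Q (ω i)) * log (Q (ω j) / P (ω j)) := fun ω => by
    rcases eq_or_ne (∏ i, Q (ω i)) 0 with h | h
    · simp [h]
    have hQ : ∀ i, Q (ω i) ≠ 0 := fun i hi => h (prod_eq_zero (mem_univ i) hi)
    rw [← mul_sum, ← prod_div_distrib,
      log_prod fun i _ => div_ne_zero (hQ i) fun hP => hQ i (hac _ hP)]
  rw [sum_congr rfl fun ω _ => hterm ω, sum_comm]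
  simp only [sum_prod_mul_apply hQ1 (fun z => log (Q z / P z)), sum_const, card_univ,
    nsmul_eq_mul]

theorem mul_neg_log_sum_prod_le {P : Z → ℝ} (hP0 : ∀ z, 0 ≤ P z) (hP1 : ∑ z, P z = 1)
    (hQ0 : ∀ z, 0 ≤ Q z) (hQ1 : ∑ z, Q z = 1) (hac : ∀ z, P z = 0 → Q z = 0)
    (D : Finset (ι → Z)) :
    (∑ ω ∈ D, ∏ i, Q (ω i)) * -log (∑ ω ∈ D, ∏ i, P (ω i)) ≤
      Fintype.card ι * ∑ z, Q z * log (Q z / P z) + binEntropy (∑ ω ∈ D, ∏ i, Q (ω i)) := by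
  rw [← sum_prod_mul_log_div_prod P hQ1 hac]
  exact mul_neg_log_sum_le_add_binEntropy (fun ω => prod_nonneg fun i _ => hQ0 _)
    (fun ω => prod_nonneg fun i _ => hP0 _) (sum_prod_eq_one hQ1) (sum_prod_eq_one hP1).le
    (prod_eq_zero_of_prod_eq_zero hac) D

end Product

lemma binEntropy_div_le_binEntropy_div {t q : ℝ} (ht : 0 < t) (htq : t ≤ q) (hq : q ≤ 1) :
    binEntropy q / q ≤ binEntropy t / t := by
  have := strictConcave_binEntropy.concaveOn.neg.secant_mono (a := 0) (x := t) (y := q)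
    ⟨le_rfl, zero_le_one⟩ ⟨ht.le, htq.trans hq⟩ ⟨ht.le.trans htq, hq⟩ ht.ne'
    (ht.trans_le htq).ne' htq
  simpa [neg_div] using this

lemma div_neg_le_log_of_mul_neg_log_le {t q p K : ℝ} (ht : 0 < t) (htq : t ≤ q) (hq : q ≤ 1)
    (hK : 0 ≤ K) (h : q * -log p ≤ K + binEntropy q) :
    -(K + binEntropy (1 - t)) / t ≤ log p := calc
  -(K + binEntropy (1 - t)) / t = -(K / t + binEntropy t / t) := by
      rw [binEntropy_one_sub]; ring
  _ ≤ -(K / q + binEntropy q / q) := by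
      gcongr -(?_ + ?_)
      · exact div_le_div_of_nonneg_left hK ht htq
      · exact binEntropy_div_le_binEntropy_div ht htq hq
  _ = -((K + binEntropy q) / q) := by ring
  _ ≤ log p := by rw [neg_le, le_div_iff₀ (ht.trans_le htq)]; linarith

theorem change_of_measure_bound_general
    {Z : Type*} [Fintype Z]
    (P Q : Z → ℝ)
    (hP0 : ∀ z, 0 ≤ P z) (hP1 : ∑ z, P z = 1)
    (hQ0 : ∀ z, 0 ≤ Q z) (hQ1 : ∑ z, Q z = 1)
    (hac : ∀ z, P z = 0 → Q z = 0)
    (n : ℕ) (D : Finset (Fin n → Z))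
    (β : ℝ) (hβ1 : β < 1)
    (hQD : 1 - β ≤ ∑ ω ∈ D, ∏ i, Q (ω i)) :
    (2 : ℝ) ^ (-(((n : ℝ) * ∑ z, Q z * Real.logb 2 (Q z / P z)) +
        (-β * Real.logb 2 β - (1 - β) * Real.logb 2 (1 - β))) / (1 - β)) ≤
      ∑ ω ∈ D, ∏ i, P (ω i) := by
  set K := ∑ z, Q z * log (Q z / P z)
  set q := ∑ ω ∈ D, ∏ i, Q (ω i)
  set p := ∑ ω ∈ D, ∏ i, P (ω i)
  have hβ : 0 < 1 - β := by linarith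
  have hq : 0 < q := hβ.trans_le hQD
  have hq1 : q ≤ 1 := sum_prod_eq_one (ι := Fin n) hQ1 ▸
    sum_le_sum_of_subset_of_nonneg (subset_univ D) fun ω _ _ => prod_nonneg fun i _ => hQ0 _
  have hp : 0 < p := (sum_nonneg fun ω _ => prod_nonneg fun i _ => hP0 _).lt_of_ne fun h =>
    hq.ne' (sum_eq_zero_of_sum_eq_zero (fun ω _ => prod_nonneg fun i _ => hP0 _)
      (fun ω _ => prod_eq_zero_of_prod_eq_zero hac ω) h.symm)
  have hnK : 0 ≤ n * K := mul_nonneg n.cast_nonneg (sum_mul_log_div_nonneg hQ0 hP0 hQ1 hP1 hac)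
  have hlogp := div_neg_le_log_of_mul_neg_log_le hβ hQD hq1 hnK
    (by simpa using mul_neg_log_sum_prod_le hP0 hP1 hQ0 hQ1 hac D)
  rw [sub_sub_cancel] at hlogp
  have hKb : ∑ z, Q z * logb 2 (Q z / P z) = K / log 2 := by
    simp only [K, logb, mul_div_assoc', sum_div]
  have hβb : -β * logb 2 β - (1 - β) * logb 2 (1 - β) = binEntropy β / log 2 := by
    rw [binEntropy, logb, logb, log_inv, log_inv]; ring
  rw [← le_logb_iff_rpow_le one_lt_two hp, hKb, hβb, logb]
  calc -(n * (K / log 2) + binEntropy β / log 2) / (1 - β)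
      = -(n * K + binEntropy β) / (1 - β) / log 2 := by ring
    _ ≤ log p / log 2 := by gcongr

/-- Change-of-measure (Haroutunian) bound: if `Qⁿ(𝒟ₙ) ≥ 1 − β` with `β ∈ [0,1)`, then
`Pⁿ(𝒟ₙ) ≥ 2^{−(n·D(Q‖P) + h₂(β))/(1−β)}`. -/
theorem change_of_measure_bound
    {Z : Type*} [Fintype Z]
    (P Q : Z → ℝ)
    (hP0 : ∀ z, 0 ≤ P z) (hP1 : ∑ z, P z = 1)
    (hQ0 : ∀ z, 0 ≤ Q z) (hQ1 : ∑ z, Q z = 1)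
    (hac : ∀ z, P z = 0 → Q z = 0)
    (n : ℕ) (D : Finset (Fin n → Z))
    (β : ℝ) (hβ0 : 0 ≤ β) (hβ1 : β < 1)
    (hQD : 1 - β ≤ ∑ ω ∈ D, ∏ i, Q (ω i)) :
    (2 : ℝ) ^ (-(((n : ℝ) * ∑ z, Q z * Real.logb 2 (Q z / P z)) +
        (-β * Real.logb 2 β - (1 - β) * Real.logb 2 (1 - β))) / (1 - β)) ≤
      ∑ ω ∈ D, ∏ i, P (ω i) :=
  change_of_measure_bound_general P Q hP0 hP1 hQ0 hQ1 hac n D β hβ1 hQD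
end
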